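/- arXiv:2511.22487 — 2 statements merged into one kernel-verified Lean document; each statement's English description precedes it below -/
import Mathlib

section
/- For positive semidefinite matrices A and B, defining the generalized geometric mean M(A,B) := √A·√(√(A⁺)·B·√(A⁺))·√A using the Moore–Penrose inverse A⁺, the kernel of M(A,B) equals the kernel of Π_A·Π_B·Π_A, where Π_A, Π_B are the projections onto the supports of A and B. -/
open scoped ComplexOrder

open Classical in
/-- The unique positive semidefinite square root of a positive semidefinite matrix
(junk value 0 otherwise). -/
noncomputable def psqrt {n : Type*} [Fintype n] [DecidableEq n] (X : Matrix n n ℂ) :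
    Matrix n n ℂ :=
  if h : X.PosSemidef then
    (h.1.eigenvectorUnitary : Matrix n n ℂ) *
      Matrix.diagonal ((↑) ∘ (Real.sqrt ·) ∘ h.1.eigenvalues) *
      (star h.1.eigenvectorUnitary : Matrix n n ℂ)
  else 0

/-- The range (support) of a matrix, i.e. the orthogonal complement of its kernel. -/
noncomputable def msupp {n : Type*} [Fintype n] [DecidableEq n] (X : Matrix n n ℂ) :
    Submodule ℂ (EuclideanSpace ℂ n) :=
  (LinearMap.ker (Matrix.toEuclideanLin X))ᗮ

/-- The kernel of a matrix, as a subspace of Euclidean space. -/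
noncomputable def mker {n : Type*} [Fintype n] [DecidableEq n] (X : Matrix n n ℂ) :
    Submodule ℂ (EuclideanSpace ℂ n) :=
  LinearMap.ker (Matrix.toEuclideanLin X)

/-- The generalized geometric mean M(A,B) = √A · √(√(A⁺) B √(A⁺)) · √A, where Ap
stands for the Moore–Penrose pseudoinverse A⁺ of A. -/
noncomputable def geoMean {n : Type*} [Fintype n] [DecidableEq n]
    (A Ap B : Matrix n n ℂ) : Matrix n n ℂ :=
  psqrt A * psqrt (psqrt Ap * B * psqrt Ap) * psqrt A

open Matrix in
/-- `Ap` is the Moore–Penrose pseudoinverse of `A` (the four Penrose conditions). -/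
def IsMPInv {n : Type*} [Fintype n] [DecidableEq n] (A Ap : Matrix n n ℂ) : Prop :=
  A * Ap * A = A ∧ Ap * A * Ap = Ap ∧ (A * Ap)ᴴ = A * Ap ∧ (Ap * A)ᴴ = Ap * A

/-!
Write `S = √A` and `T = √A⁺`. The pseudoinverse of a positive semidefinite `A` is again positive
semidefinite and commutes with `A`, so `T * S = √(A⁺ A) = √Π_A = Π_A`. For positive semidefinite
`X`, the kernel of `Yᴴ X Y` is the preimage of `ker X` under `Y`, and `ker √X = ker X`; hence
`ker M(A,B) = S⁻¹ (ker √(T B T)) = (T S)⁻¹ (ker B) = Π_A⁻¹ (ker Π_B) = ker (Π_A Π_B Π_A)`.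
-/

open scoped MatrixOrder

namespace CFC

variable {A : Type*} [PartialOrder A] [NonUnitalRing A] [TopologicalSpace A] [StarRing A]
  [Module ℝ A] [SMulCommClass ℝ A A] [IsScalarTower ℝ A A] [StarOrderedRing A]
  [NonUnitalContinuousFunctionalCalculus ℝ A IsSelfAdjoint] [NonnegSpectrumClass ℝ A]
  [IsTopologicalRing A] [T2Space A]

lemma sqrt_mul_sqrt_of_commute {a b : A} (ha : 0 ≤ a) (hb : 0 ≤ b) (h : Commute a b) :
    sqrt a * sqrt b = sqrt (a * b) := by
  have hc : Commute (sqrt a) (sqrt b) := ((h.cfcₙ_nnreal _).symm.cfcₙ_nnreal _).symm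
  refine (sqrt_unique ?_ (hc.mul_nonneg (sqrt_nonneg a) (sqrt_nonneg b))).symm
  rw [hc.symm.mul_mul_mul_comm, sqrt_mul_sqrt_self a, sqrt_mul_sqrt_self b]

end CFC

namespace Matrix

variable {n : Type*} [Fintype n] [DecidableEq n]

lemma psqrt_eq_sqrt (X : Matrix n n ℂ) : psqrt X = CFC.sqrt X := by
  by_cases hX : X.PosSemidef
  · rw [psqrt, dif_pos hX, CFC.sqrt_eq_cfc, cfc_nnreal_eq_real _ X, hX.1.cfc_eq, IsHermitian.cfc,
      Unitary.conjStarAlgAut_apply]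
    simp only [Real.sqrt.eq_1]
    rfl
  · rw [psqrt, dif_neg hX, CFC.sqrt_of_not_nonneg (by rwa [nonneg_iff_posSemidef])]

lemma posSemidef_sqrt {𝕜 : Type*} [RCLike 𝕜] (X : Matrix n n 𝕜) : (CFC.sqrt X).PosSemidef :=
  nonneg_iff_posSemidef.mp (CFC.sqrt_nonneg X)

lemma conjTranspose_sqrt {𝕜 : Type*} [RCLike 𝕜] (X : Matrix n n 𝕜) :
    (CFC.sqrt X)ᴴ = CFC.sqrt X :=
  (posSemidef_sqrt X).isHermitian.eq

lemma mem_mker_iff {X : Matrix n n ℂ} {v : EuclideanSpace ℂ n} :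
    v ∈ mker X ↔ X *ᵥ v.ofLp = 0 := by
  simp [mker, toLpLin_apply]

lemma PosSemidef.mker_conjTranspose_mul_mul_same {X : Matrix n n ℂ} (hX : X.PosSemidef)
    (S : Matrix n n ℂ) : mker (Sᴴ * X * S) = (mker X).comap (toEuclideanLin S) := by
  ext v
  rw [Submodule.mem_comap, mem_mker_iff, mem_mker_iff,
    ← (hX.conjTranspose_mul_mul_same S).dotProduct_mulVec_zero_iff,
    ← hX.dotProduct_mulVec_zero_iff]
  simp [toLpLin_apply, ← mulVec_mulVec, dotProduct_mulVec, star_mulVec]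

lemma PosSemidef.mker_sqrt_mul_mul_sqrt {X : Matrix n n ℂ} (hX : X.PosSemidef)
    (Y : Matrix n n ℂ) :
    mker (CFC.sqrt Y * X * CFC.sqrt Y) = (mker X).comap (toEuclideanLin (CFC.sqrt Y)) := by
  simpa only [conjTranspose_sqrt] using hX.mker_conjTranspose_mul_mul_same (CFC.sqrt Y)

lemma mker_sqrt {X : Matrix n n ℂ} (hX : X.PosSemidef) : mker (CFC.sqrt X) = mker X := by
  -- `X = (√X)ᴴ * 1 * √X`
  have h := PosSemidef.one.mker_conjTranspose_mul_mul_same (CFC.sqrt X)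
  rw [conjTranspose_sqrt, mul_one, CFC.sqrt_mul_sqrt_self X hX.nonneg] at h
  rw [h, mker, mker, toLpLin_one, LinearMap.ker_id, Submodule.comap_bot]

lemma mker_eq_of_range_eq_msupp {P X : Matrix n n ℂ} (hP : P.IsHermitian)
    (h : LinearMap.range (toEuclideanLin P) = msupp X) : mker P = mker X := by
  rw [mker, ← (isSymmetric_toEuclideanLin_iff.mpr hP).orthogonal_range, h, msupp,
    Submodule.orthogonal_orthogonal, mker]

lemma range_toEuclideanLin_eq_msupp {X : Matrix n n ℂ} (hX : X.IsHermitian) :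
    LinearMap.range (toEuclideanLin X) = msupp X := by
  rw [msupp, ← (isSymmetric_toEuclideanLin_iff.mpr hX).orthogonal_range,
    Submodule.orthogonal_orthogonal]

lemma eq_of_isStarProjection_of_range_eq {P Q : Matrix n n ℂ} (hP : IsStarProjection P)
    (hQ : IsStarProjection Q)
    (h : LinearMap.range (toEuclideanLin P) = LinearMap.range (toEuclideanLin Q)) : P = Q := by
  refine EquivLike.injective (toEuclideanCLM (n := n) (𝕜 := ℂ)) <|
    (ContinuousLinearMap.IsStarProjection.ext_iff (hP.map toEuclideanCLM)
      (hQ.map toEuclideanCLM)).mpr ?_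
  simpa [coe_toEuclideanCLM_eq_toEuclideanLin] using h

end Matrix

namespace IsMPInv

open Matrix

variable {n : Type*} [Fintype n] [DecidableEq n] {A X Y : Matrix n n ℂ}

lemma conjTranspose (h : IsMPInv A X) : IsMPInv Aᴴ Xᴴ := by
  obtain ⟨h₁, h₂, h₃, h₄⟩ := h
  refine ⟨?_, ?_, ?_, ?_⟩ <;>
    simp only [← conjTranspose_mul, mul_assoc, conjTranspose_conjTranspose] at * <;>
    simp only [h₁, h₂, h₃, h₄]

lemma mul_left_eq (hX : IsMPInv A X) (hY : IsMPInv A Y) : A * X = A * Y :=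
  calc A * X = (A * Y * (A * X))ᴴ := by rw [← mul_assoc, hY.1, hX.2.2.1]
    _ = A * X * A * Y := by rw [conjTranspose_mul, hX.2.2.1, hY.2.2.1, ← mul_assoc]
    _ = A * Y := by rw [hX.1]

lemma unique (hX : IsMPInv A X) (hY : IsMPInv A Y) : X = Y := by
  have hXA : X * A = Y * A := by
    simpa only [← conjTranspose_mul, conjTranspose_inj] using
      hX.conjTranspose.mul_left_eq hY.conjTranspose
  calc X = X * (A * X) := by rw [← mul_assoc, hX.2.1]
    _ = Y * A * Y := by rw [hX.mul_left_eq hY, ← mul_assoc, hXA]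
    _ = Y := hY.2.1

lemma conjTranspose_eq (hA : A.IsHermitian) (h : IsMPInv A X) : Xᴴ = X :=
  (hA.eq ▸ h.conjTranspose).unique h

lemma posSemidef (hA : A.PosSemidef) (h : IsMPInv A X) : X.PosSemidef := by
  simpa only [h.conjTranspose_eq hA.1, h.2.1] using hA.conjTranspose_mul_mul_same X

lemma commute (hA : A.IsHermitian) (h : IsMPInv A X) : Commute X A :=
  calc X * A = (X * A)ᴴ := h.2.2.2.symm
    _ = A * X := by rw [conjTranspose_mul, hA.eq, h.conjTranspose_eq hA]

lemma isStarProjection_mul (h : IsMPInv A X) : IsStarProjection (A * X) :=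
  ⟨by rw [IsIdempotentElem, ← mul_assoc, h.1], h.2.2.1⟩

lemma range_toEuclideanLin_mul (h : IsMPInv A X) :
    LinearMap.range (toEuclideanLin (A * X)) = LinearMap.range (toEuclideanLin A) := by
  refine le_antisymm ?_ ?_
  · rw [toLpLin_mul_same]
    exact LinearMap.range_comp_le_range _ _
  · conv_lhs => rw [← h.1, toLpLin_mul_same]
    exact LinearMap.range_comp_le_range _ _

end IsMPInv

/-- The kernel of the generalized geometric mean M(A,B) equals the kernel of
Π_A Π_B Π_A, where Π_A, Π_B are the projections onto the supports of A and B. -/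
theorem ker_geoMean_eq_ker_proj
    {n : Type*} [Fintype n] [DecidableEq n]
    (A B Ap PiA PiB : Matrix n n ℂ) (hA : A.PosSemidef) (hB : B.PosSemidef)
    (hAp : IsMPInv A Ap)
    (hAherm : PiA.IsHermitian) (hAidem : PiA * PiA = PiA)
    (hArange : LinearMap.range (Matrix.toEuclideanLin PiA) = msupp A)
    (hBherm : PiB.IsHermitian) (hBidem : PiB * PiB = PiB)
    (hBrange : LinearMap.range (Matrix.toEuclideanLin PiB) = msupp B) :
    mker (geoMean A Ap B) = mker (PiA * PiB * PiA) := by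
  open Matrix in
  have hPiA : IsStarProjection PiA := ⟨hAidem, hAherm⟩
  have hPiA_eq : PiA = A * Ap := eq_of_isStarProjection_of_range_eq hPiA
    hAp.isStarProjection_mul (by rw [hArange, hAp.range_toEuclideanLin_mul,
      range_toEuclideanLin_eq_msupp hA.1])
  have hApsd := hAp.posSemidef hA
  have hsqrt : CFC.sqrt Ap * CFC.sqrt A = PiA := by
    rw [CFC.sqrt_mul_sqrt_of_commute hApsd.nonneg hA.nonneg (hAp.commute hA.1),
      (hAp.commute hA.1).eq, ← hPiA_eq]
    exact CFC.sqrt_unique hAidem hPiA.nonneg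
  have hC : (CFC.sqrt Ap * B * CFC.sqrt Ap).PosSemidef := by
    simpa only [conjTranspose_sqrt] using hB.conjTranspose_mul_mul_same (CFC.sqrt Ap)
  have hPiB : PiB.PosSemidef :=
    nonneg_iff_posSemidef.mp (IsStarProjection.nonneg ⟨hBidem, hBherm⟩)
  calc mker (geoMean A Ap B)
      = (mker B).comap (toEuclideanLin (CFC.sqrt Ap * CFC.sqrt A)) := by
        rw [geoMean, psqrt_eq_sqrt, psqrt_eq_sqrt, psqrt_eq_sqrt,
          (posSemidef_sqrt _).mker_sqrt_mul_mul_sqrt, mker_sqrt hC,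
          hB.mker_sqrt_mul_mul_sqrt, toLpLin_mul_same, Submodule.comap_comp]
    _ = mker (PiA * PiB * PiA) := by
        rw [hsqrt, ← mker_eq_of_range_eq_msupp hBherm hBrange,
          ← hPiB.mker_conjTranspose_mul_mul_same, hAherm.eq]
end

section
/- Let A, B be positive semidefinite matrices with A + B invertible, and let U be a unitary with √A·√B·U = √(√A·B·√A). Then a vector v ∈ supp(A) satisfies √B·v = λ·U·√A·v if and only if M(A⁺,B)·v = λ·v, where M(A⁺,B) = √(A⁺)·√(√A·B·√A)·√(A⁺). -/
open scoped ComplexOrder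

/-! Write `S = √A`, `T = √B`, `R = √A⁺` and `C = √(√A B √A)`. As `C` is self-adjoint, the polar
relation `S T U = C` also gives `C = U* T S`. The Moore–Penrose inverse of a positive `A` is the
functional calculus `x ↦ x⁻¹` of `A` (with `0⁻¹ = 0`), hence `S R A = R S A = A` and `A R = S`:
so `S R v = R S v = v` on the range of `A`, which is `supp A`, and `ker R ⊆ ker S`.

For such `v` put `y = U* T v - λ S v`. The first equation says `y = 0`; since `R C R v = R U* T v`
and `λ v = R (λ S v)`, the second says `R y = 0`. They agree because `y ⊥ ker S`: both `S v` and
`v = S R v` lie in `range S ⊥ ker S`, and `T U` maps `ker S` into itself as `S T U = U* T S`. -/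

section

variable {A : Type*} [Ring A] [StarRing A] [TopologicalSpace A] [Algebra ℝ A]
  [ContinuousFunctionalCalculus ℝ A IsSelfAdjoint]

lemma cfc_commute_self {a : A} (ha : IsSelfAdjoint a) (f : ℝ → ℝ) : Commute (cfc f a) a := by
  simpa only [cfc_id' ℝ a] using cfc_commute_cfc f (fun x : ℝ => x) a

-- Without `hinv` (`0` isolated in the spectrum), `cfc (·⁻¹) a` is the junk value `0`.
lemma mul_cfc_inv_mul_self {a : A} (ha : IsSelfAdjoint a)
    (hinv : ContinuousOn (·⁻¹) (spectrum ℝ a)) : a * cfc (·⁻¹ : ℝ → ℝ) a * a = a := by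
  have key : cfc (fun x : ℝ => x * x⁻¹ * x) a = a :=
    (cfc_congr fun x _ => mul_inv_mul_cancel x).trans (cfc_id' ℝ a)
  rwa [cfc_mul (fun x : ℝ => x * x⁻¹) (fun x => x) a, cfc_mul (fun x : ℝ => x) (·⁻¹) a,
    cfc_id' ℝ a] at key

lemma cfc_inv_mul_self_mul_cfc_inv {a : A} (ha : IsSelfAdjoint a)
    (hinv : ContinuousOn (·⁻¹) (spectrum ℝ a)) :
    cfc (·⁻¹ : ℝ → ℝ) a * a * cfc (·⁻¹ : ℝ → ℝ) a = cfc (·⁻¹ : ℝ → ℝ) a := by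
  have key : cfc (fun x : ℝ => x⁻¹ * x * x⁻¹) a = cfc (·⁻¹ : ℝ → ℝ) a :=
    cfc_congr fun x _ => by simpa using mul_inv_mul_cancel x⁻¹
  rwa [cfc_mul (fun x : ℝ => x⁻¹ * x) (·⁻¹) a, cfc_mul (·⁻¹ : ℝ → ℝ) (fun x => x) a,
    cfc_id' ℝ a] at key

lemma isSelfAdjoint_mul_cfc_inv {a : A} (ha : IsSelfAdjoint a)
    (hinv : ContinuousOn (·⁻¹) (spectrum ℝ a)) : IsSelfAdjoint (a * cfc (·⁻¹ : ℝ → ℝ) a) := by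
  have key : cfc (fun x : ℝ => x * x⁻¹) a = a * cfc (·⁻¹ : ℝ → ℝ) a := by
    rw [cfc_mul (fun x : ℝ => x) (·⁻¹) a, cfc_id' ℝ a]
  exact key ▸ cfc_predicate _ a

end

section

variable {A : Type*} [PartialOrder A] [Ring A] [StarRing A] [TopologicalSpace A]
  [StarOrderedRing A] [Algebra ℝ A] [ContinuousFunctionalCalculus ℝ A IsSelfAdjoint]
  [NonnegSpectrumClass ℝ A]

lemma cfc_inv_nonneg {a : A} (ha : 0 ≤ a) : 0 ≤ cfc (·⁻¹ : ℝ → ℝ) a :=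
  cfc_nonneg fun _ hx => _root_.inv_nonneg.2 (spectrum_nonneg_of_nonneg ha hx)

variable [IsSemitopologicalRing A] [T2Space A]

namespace CFC

lemma sqrt_eq_cfc_real_sqrt {a : A} (ha : 0 ≤ a) : sqrt a = cfc Real.sqrt a := by
  rw [sqrt_eq_real_sqrt a ha, cfcₙ_eq_cfc]

lemma sqrt_cfc_inv {a : A} (ha : 0 ≤ a) (hinv : ContinuousOn (·⁻¹) (spectrum ℝ a)) :
    sqrt (cfc (·⁻¹ : ℝ → ℝ) a) = cfc (fun x => √x⁻¹) a := by
  rw [sqrt_eq_cfc_real_sqrt (cfc_inv_nonneg ha), ← cfc_comp' Real.sqrt (·⁻¹) a]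

lemma sqrt_mul_sqrt_cfc_inv_mul_self {a : A} (ha : 0 ≤ a)
    (hinv : ContinuousOn (·⁻¹) (spectrum ℝ a)) :
    sqrt a * sqrt (cfc (·⁻¹ : ℝ → ℝ) a) * a = a := by
  have key : cfc (fun x : ℝ => √x * √x⁻¹ * x) a = a := by
    refine (cfc_congr fun x hx => ?_).trans (cfc_id' ℝ a)
    rw [Real.sqrt_inv, mul_assoc, inv_mul_eq_div, Real.div_sqrt,
      Real.mul_self_sqrt (spectrum_nonneg_of_nonneg ha hx)]
  rwa [cfc_mul (fun x : ℝ => √x * √x⁻¹) (fun x => x) a, cfc_mul Real.sqrt (fun x => √x⁻¹) a,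
    cfc_id' ℝ a, ← sqrt_cfc_inv ha hinv, ← sqrt_eq_cfc_real_sqrt ha] at key

lemma sqrt_cfc_inv_mul_sqrt_mul_self {a : A} (ha : 0 ≤ a)
    (hinv : ContinuousOn (·⁻¹) (spectrum ℝ a)) :
    sqrt (cfc (·⁻¹ : ℝ → ℝ) a) * sqrt a * a = a := by
  rw [sqrt_cfc_inv ha hinv, sqrt_eq_cfc_real_sqrt ha, (cfc_commute_cfc _ _ a).eq,
    ← sqrt_eq_cfc_real_sqrt ha, ← sqrt_cfc_inv ha hinv, sqrt_mul_sqrt_cfc_inv_mul_self ha hinv]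

lemma mul_sqrt_cfc_inv {a : A} (ha : 0 ≤ a) (hinv : ContinuousOn (·⁻¹) (spectrum ℝ a)) :
    a * sqrt (cfc (·⁻¹ : ℝ → ℝ) a) = sqrt a := by
  have key : cfc (fun x : ℝ => x * √x⁻¹) a = cfc Real.sqrt a := by
    refine cfc_congr fun x _ => ?_
    rw [Real.sqrt_inv, ← div_eq_mul_inv, Real.div_sqrt]
  rwa [cfc_mul (fun x : ℝ => x) (fun x => √x⁻¹) a, cfc_id' ℝ a, ← sqrt_cfc_inv ha hinv,
    ← sqrt_eq_cfc_real_sqrt ha] at key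

end CFC

end

section

variable {𝕜 E : Type*} [RCLike 𝕜] [NormedAddCommGroup E] [InnerProductSpace 𝕜 E] [CompleteSpace E]

lemma IsSelfAdjoint.apply_mem_orthogonal_ker {S : E →L[𝕜] E} (hS : IsSelfAdjoint S) (x : E) :
    S x ∈ S.kerᗮ := by
  rw [S.orthogonal_ker, hS.adjoint_eq]
  exact Submodule.le_topologicalClosure _ ⟨x, rfl⟩

theorem ContinuousLinearMap.pencil_eigen_iff_of_polar {S T R C U : E →L[𝕜] E}
    (hS : IsSelfAdjoint S) (hT : IsSelfAdjoint T) (hC : IsSelfAdjoint C)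
    (hU : U ∈ unitary (E →L[𝕜] E)) (hpolar : S * T * U = C)
    (hker : R.ker ≤ S.ker) {v : E} (hSR : S (R v) = v) (hRS : R (S v) = v) (lam : 𝕜) :
    T v = lam • (U * S) v ↔ (R * C * R) v = lam • v := by
  have hC' : C = star U * T * S := by
    rw [← hC.star_eq, ← hpolar, star_mul, star_mul, hS.star_eq, hT.star_eq, mul_assoc]
  set y := star U (T v) - lam • S v
  have hlhs : T v = lam • (U * S) v ↔ y = 0 := by
    rw [sub_eq_zero, mul_apply_eq_comp]
    constructor
    · intro h
      rw [h, map_smul, ← mul_apply_eq_comp, Unitary.star_mul_self_of_mem hU, one_apply_eq_self]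
    · intro h
      rw [← map_smul, ← h, ← mul_apply_eq_comp U, Unitary.mul_star_self_of_mem hU,
        one_apply_eq_self]
  have hrhs : (R * C * R) v = lam • v ↔ R y = 0 := by
    have hRCR : (R * C * R) v = R (star U (T v)) := by simp [hC', hSR]
    rw [hRCR, ← hRS, ← map_smul, ← sub_eq_zero, ← map_sub, hRS]
  have hv : v ∈ S.kerᗮ := hSR ▸ hS.apply_mem_orthogonal_ker (R v)
  have hy : y ∈ S.kerᗮ := by
    refine Submodule.sub_mem _ ?_ (Submodule.smul_mem _ _ (hS.apply_mem_orthogonal_ker v))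
    refine (Submodule.mem_orthogonal _ _).2 fun z hz => ?_
    have hTUz : T (U z) ∈ S.ker := by
      rw [LinearMap.mem_ker, coe_coe] at hz ⊢
      calc S (T (U z)) = C z := by rw [← hpolar, mul_apply_eq_comp, mul_apply_eq_comp]
        _ = 0 := by rw [hC', mul_apply_eq_comp, mul_apply_eq_comp, hz, map_zero, map_zero]
    rw [star_eq_adjoint, adjoint_inner_right, ← hT.adjoint_eq, adjoint_inner_right]
    exact Submodule.inner_right_of_mem_orthogonal hTUz hv
  rw [hlhs, hrhs]
  refine ⟨fun h => by rw [h, map_zero], fun h => ?_⟩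
  have : y ∈ S.ker ⊓ S.kerᗮ := ⟨hker h, hy⟩
  rwa [S.ker.inf_orthogonal_eq_bot, Submodule.mem_bot] at this

end

namespace Matrix

variable {n : Type*} [Fintype n] [DecidableEq n]

lemma toEuclideanLin_mul_apply {𝕜 : Type*} [RCLike 𝕜] (M N : Matrix n n 𝕜)
    (x : EuclideanSpace 𝕜 n) :
    toEuclideanLin (M * N) x = toEuclideanLin M (toEuclideanLin N x) := by
  simp only [← coe_toEuclideanCLM_eq_toEuclideanLin, ContinuousLinearMap.coe_coe, map_mul,
    mul_apply_eq_comp]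

theorem pencil_eigen_iff_of_polar {𝕜 : Type*} [RCLike 𝕜] {S T R C U : Matrix n n 𝕜}
    (hS : IsSelfAdjoint S) (hT : IsSelfAdjoint T) (hC : IsSelfAdjoint C)
    (hU : U ∈ unitaryGroup n 𝕜) (hpolar : S * T * U = C)
    (hker : LinearMap.ker (toEuclideanLin R) ≤ LinearMap.ker (toEuclideanLin S))
    {v : EuclideanSpace 𝕜 n} (hSR : toEuclideanLin S (toEuclideanLin R v) = v)
    (hRS : toEuclideanLin R (toEuclideanLin S v) = v) (lam : 𝕜) :
    toEuclideanLin T v = lam • toEuclideanLin (U * S) v ↔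
      toEuclideanLin (R * C * R) v = lam • v := by
  simp only [← coe_toEuclideanCLM_eq_toEuclideanLin, ContinuousLinearMap.coe_coe, map_mul]
    at hker hSR hRS ⊢
  exact ContinuousLinearMap.pencil_eigen_iff_of_polar (hS.map _) (hT.map _) (hC.map _)
    (Unitary.map_mem _ hU) (by rw [← map_mul, ← map_mul, hpolar]) hker hSR hRS lam

end Matrix

section

open Matrix
open scoped MatrixOrder

variable {n : Type*} [Fintype n] [DecidableEq n]

lemma IsMPInv.unique_s14 {A X Y : Matrix n n ℂ} (hX : IsMPInv A X) (hY : IsMPInv A Y) : X = Y := by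
  obtain ⟨hX₁, hX₂, hX₃, hX₄⟩ := hX
  obtain ⟨hY₁, hY₂, hY₃, hY₄⟩ := hY
  have hAX : A * X = A * Y :=
    calc A * X = (A * Y) * (A * X) := by rw [← mul_assoc, hY₁]
      _ = ((A * X) * (A * Y))ᴴ := by rw [conjTranspose_mul, hX₃, hY₃]
      _ = A * Y := by rw [← mul_assoc, hX₁, hY₃]
  have hXA : X * A = Y * A :=
    calc X * A = (X * A) * (Y * A) := by rw [mul_assoc, ← mul_assoc A, hY₁]
      _ = ((Y * A) * (X * A))ᴴ := by rw [conjTranspose_mul, hX₄, hY₄]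
      _ = Y * A := by rw [mul_assoc, ← mul_assoc A, hX₁, hY₄]
  calc X = X * A * X := hX₂.symm
    _ = Y * A * Y := by rw [mul_assoc, hAX, ← mul_assoc, hXA]
    _ = Y := hY₂

lemma isMPInv_cfc_inv {A : Matrix n n ℂ} (hA : A.IsHermitian) :
    IsMPInv A (cfc (·⁻¹ : ℝ → ℝ) A) := by
  have hinv : ContinuousOn (·⁻¹) (spectrum ℝ A) := A.finite_real_spectrum.continuousOn _
  have hsa : IsSelfAdjoint (A * cfc (·⁻¹ : ℝ → ℝ) A) := isSelfAdjoint_mul_cfc_inv hA hinv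
  refine ⟨mul_cfc_inv_mul_self hA hinv, cfc_inv_mul_self_mul_cfc_inv hA hinv, hsa, ?_⟩
  rw [(cfc_commute_self hA _).eq]
  exact hsa

lemma IsMPInv.eq_cfc_inv {A Ap : Matrix n n ℂ} (hA : A.IsHermitian) (h : IsMPInv A Ap) :
    Ap = cfc (·⁻¹ : ℝ → ℝ) A :=
  h.unique_s14 (isMPInv_cfc_inv hA)

lemma msupp_eq_range {A : Matrix n n ℂ} (hA : A.IsHermitian) :
    msupp A = LinearMap.range (toEuclideanLin A) := by
  rw [msupp, LinearMap.orthogonal_ker, ← toEuclideanLin_conjTranspose_eq_adjoint, hA.eq]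

lemma psqrt_eq_sqrt {X : Matrix n n ℂ} (hX : X.PosSemidef) : psqrt X = CFC.sqrt X := by
  rw [psqrt, dif_pos hX, CFC.sqrt_eq_cfc, cfc_nnreal_eq_real _ X, hX.1.cfc_eq]
  simp only [IsHermitian.cfc, Unitary.conjStarAlgAut_apply]
  congr 2
  ext i j
  simp [diagonal_apply, max_eq_left (hX.eigenvalues_nonneg _)]

lemma isSelfAdjoint_psqrt (X : Matrix n n ℂ) : IsSelfAdjoint (psqrt X) := by
  by_cases hX : X.PosSemidef
  · rw [psqrt_eq_sqrt hX]
    exact (CFC.sqrt_nonneg X).isSelfAdjoint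
  · rw [psqrt, dif_neg hX]
    exact .zero _

lemma psqrt_cfc_inv {A : Matrix n n ℂ} (hA : A.PosSemidef) :
    psqrt (cfc (·⁻¹ : ℝ → ℝ) A) = CFC.sqrt (cfc (·⁻¹ : ℝ → ℝ) A) :=
  psqrt_eq_sqrt (nonneg_iff_posSemidef.mp (cfc_inv_nonneg hA.nonneg))

lemma IsMPInv.psqrt_mul_psqrt_inv_mul_self {A Ap : Matrix n n ℂ} (hA : A.PosSemidef)
    (h : IsMPInv A Ap) : psqrt A * psqrt Ap * A = A := by
  obtain rfl := h.eq_cfc_inv hA.1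
  rw [psqrt_eq_sqrt hA, psqrt_cfc_inv hA]
  exact CFC.sqrt_mul_sqrt_cfc_inv_mul_self hA.nonneg (A.finite_real_spectrum.continuousOn _)

lemma IsMPInv.psqrt_inv_mul_psqrt_mul_self {A Ap : Matrix n n ℂ} (hA : A.PosSemidef)
    (h : IsMPInv A Ap) : psqrt Ap * psqrt A * A = A := by
  obtain rfl := h.eq_cfc_inv hA.1
  rw [psqrt_eq_sqrt hA, psqrt_cfc_inv hA]
  exact CFC.sqrt_cfc_inv_mul_sqrt_mul_self hA.nonneg (A.finite_real_spectrum.continuousOn _)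

lemma IsMPInv.mul_psqrt_inv {A Ap : Matrix n n ℂ} (hA : A.PosSemidef) (h : IsMPInv A Ap) :
    A * psqrt Ap = psqrt A := by
  obtain rfl := h.eq_cfc_inv hA.1
  rw [psqrt_eq_sqrt hA, psqrt_cfc_inv hA]
  exact CFC.mul_sqrt_cfc_inv hA.nonneg (A.finite_real_spectrum.continuousOn _)

end

theorem pencil_eigen_iff_geoMean_eigen_general
    {n : Type*} [Fintype n] [DecidableEq n]
    (A B Ap U : Matrix n n ℂ) (hA : A.PosSemidef)
    (hAp : IsMPInv A Ap)
    (hU : U ∈ Matrix.unitaryGroup n ℂ)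
    (hpolar : psqrt A * psqrt B * U = psqrt (psqrt A * B * psqrt A))
    (v : EuclideanSpace ℂ n) (hv : v ∈ msupp A) (lam : ℂ) :
    Matrix.toEuclideanLin (psqrt B) v = lam • Matrix.toEuclideanLin (U * psqrt A) v ↔
      Matrix.toEuclideanLin (psqrt Ap * psqrt (psqrt A * B * psqrt A) * psqrt Ap) v
        = lam • v := by
  obtain ⟨w, rfl⟩ : v ∈ LinearMap.range (Matrix.toEuclideanLin A) := msupp_eq_range hA.1 ▸ hv
  refine Matrix.pencil_eigen_iff_of_polar (isSelfAdjoint_psqrt A) (isSelfAdjoint_psqrt B)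
    (isSelfAdjoint_psqrt _) hU hpolar (fun y hy => ?_) ?_ ?_ lam
  · rw [LinearMap.mem_ker] at hy ⊢
    rw [← hAp.mul_psqrt_inv hA, Matrix.toEuclideanLin_mul_apply, hy, map_zero]
  · rw [← Matrix.toEuclideanLin_mul_apply, ← Matrix.toEuclideanLin_mul_apply,
      hAp.psqrt_mul_psqrt_inv_mul_self hA]
  · rw [← Matrix.toEuclideanLin_mul_apply, ← Matrix.toEuclideanLin_mul_apply,
      hAp.psqrt_inv_mul_psqrt_mul_self hA]

/-- For v in the support of A: √B v = λ U √A v iff M(A⁺,B) v = λ v, where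
M(A⁺,B) = √(A⁺) √(√A B √A) √(A⁺). -/
theorem pencil_eigen_iff_geoMean_eigen
    {n : Type*} [Fintype n] [DecidableEq n]
    (A B Ap U : Matrix n n ℂ) (hA : A.PosSemidef) (hB : B.PosSemidef)
    (hAB : IsUnit (A + B)) (hAp : IsMPInv A Ap)
    (hU : U ∈ Matrix.unitaryGroup n ℂ)
    (hpolar : psqrt A * psqrt B * U = psqrt (psqrt A * B * psqrt A))
    (v : EuclideanSpace ℂ n) (hv : v ∈ msupp A) (lam : ℂ) :
    Matrix.toEuclideanLin (psqrt B) v = lam • Matrix.toEuclideanLin (U * psqrt A) v ↔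
      Matrix.toEuclideanLin (psqrt Ap * psqrt (psqrt A * B * psqrt A) * psqrt Ap) v
        = lam • v :=
  pencil_eigen_iff_geoMean_eigen_general A B Ap U hA hAp hU hpolar v hv lam
end
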